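/- Let X be a real n × m matrix whose columns are all nonzero (equivalently, (XᵀX)_{ii} ≠ 0 for every i), and let X' be a real n × m matrix. Define the diagonal m × m matrix W by W_{ii} = (XᵀX')_{ii} / (XᵀX)_{ii} and W_{ij} = 0 for i ≠ j. Then W is a global minimizer of the Frobenius-norm objective V ↦ ‖XV − X'‖² over all diagonal m × m matrices V: for every diagonal matrix V, ‖XW − X'‖² ≤ ‖XV − X'‖². (The closed-form solution for the gene weights used in the dual analysis visualization.) -/
import Mathlib


open Matrix

attribute [local instance] Matrix.frobeniusNormedAddCommGroup

private lemma frob_sq {n m : ℕ} (A : Matrix (Fin n) (Fin m) ℝ) :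
    ‖A‖ ^ 2 = ∑ j, ∑ i, (A i j) ^ 2 := by
  rw [Matrix.frobenius_norm_def]
  have h0 : (0:ℝ) ≤ ∑ i, ∑ j, ‖A i j‖ ^ (2:ℝ) := by positivity
  rw [← Real.rpow_natCast ((∑ i, ∑ j, ‖A i j‖ ^ (2:ℝ)) ^ ((1:ℝ)/2)) 2,
    ← Real.rpow_mul h0]
  norm_num
  exact Finset.sum_comm

private lemma quad_min {a b : ℝ} (ha : a ≠ 0) (ha0 : 0 ≤ a) (c d : ℝ) :
    (b / a) ^ 2 * a - 2 * (b / a) * b + d ≤ c ^ 2 * a - 2 * c * b + d := by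
  have ha' : 0 < a := lt_of_le_of_ne ha0 (Ne.symm ha)
  have h : (b / a) * a = b := div_mul_cancel₀ b ha
  nlinarith [sq_nonneg (c * a - b), sq_nonneg (c - b / a), mul_pos ha' ha']

/-- Closed-form solution for the gene weights: for a real `n × m` matrix `X`
with all columns nonzero (i.e. `(XᵀX)_{ii} ≠ 0` for all `i`), the diagonal
matrix `W` with `W_{ii} = (XᵀX')_{ii} / (XᵀX)_{ii}` is a global minimizer of
`V ↦ ‖XV − X'‖²` (Frobenius norm) over all diagonal matrices `V`. -/
theorem diag_closed_form_minimizes_frobenius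
    (n m : ℕ) (X X' : Matrix (Fin n) (Fin m) ℝ)
    (hX : ∀ i, (Xᵀ * X) i i ≠ 0) :
    ∀ V : Matrix (Fin m) (Fin m) ℝ, V.IsDiag →
      ‖X * Matrix.diagonal (fun i => (Xᵀ * X') i i / (Xᵀ * X) i i) - X'‖ ^ 2
        ≤ ‖X * V - X'‖ ^ 2 := by
  intro V hV
  rw [frob_sq, frob_sq]
  apply Finset.sum_le_sum
  intro j _
  have hVij : ∀ i, (X * V) i j = X i j * V j j := by
    intro i
    rw [Matrix.mul_apply]
    rw [Finset.sum_eq_single j]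
    · intro k _ hk
      rw [hV hk, mul_zero]
    · simp
  have hWij : ∀ i,
      (X * Matrix.diagonal (fun i => (Xᵀ * X') i i / (Xᵀ * X) i i)) i j
        = X i j * ((Xᵀ * X') j j / (Xᵀ * X) j j) := by
    intro i
    rw [Matrix.mul_diagonal]
  have expand : ∀ c : ℝ, ∑ i, ((X i j * c - X' i j)) ^ 2
      = c ^ 2 * (Xᵀ * X) j j - 2 * c * (Xᵀ * X') j j + ∑ i, (X' i j) ^ 2 := by
    intro c
    rw [Matrix.mul_apply, Matrix.mul_apply, Finset.mul_sum, Finset.mul_sum,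
      ← Finset.sum_sub_distrib, ← Finset.sum_add_distrib]
    apply Finset.sum_congr rfl
    intro i _
    simp [Matrix.transpose_apply]
    ring
  simp only [Matrix.sub_apply, hVij, hWij]
  rw [expand, expand]
  have hnn : 0 ≤ (Xᵀ * X) j j := by
    rw [Matrix.mul_apply]
    exact Finset.sum_nonneg fun i _ => mul_self_nonneg (X i j)
  exact quad_min (hX j) hnn _ _
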